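/- Let q̂(s) = s⁻⁴ and L[q] := −(1/12)( q'' + (1/s + 3s/(R(1+s²/(2R)))) q' − q/s² ) for R > 0. Then there exist c > 0 and s₀ ≥ 1 such that L[q̂](s) ≥ c/s⁶ for all s ≥ s₀. -/

import Mathlib

/-
For the power t ↦ t ^ m the operator is explicit: with ρ = 6 s² / (2R + s²),
L[t ^ m](s) = -(1/12) s ^ (m - 2) (m² - 1 + m ρ).
For m = -4 this is s⁻⁶ (ρ/3 - 5/4), and ρ ↑ 6 as s → ∞, so once s² ≥ 6R we have
ρ ≥ 9/2 and L[s⁻⁴] ≥ s⁻⁶ / 4.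
-/

/-- The radial (Fourier mode 1) lubrication operator with weight (1+s²/(2R))³. -/
noncomputable def Lop (R : ℝ) (q : ℝ → ℝ) (s : ℝ) : ℝ :=
  -(1 / 12) * (deriv (deriv q) s
    + (1 / s + 3 * s / (R * (1 + s ^ 2 / (2 * R)))) * deriv q s
    - q s / s ^ 2)

theorem Lop_zpow {R : ℝ} (hR : R ≠ 0) (m : ℤ) {s : ℝ} (hs : s ≠ 0) :
    Lop R (fun t => t ^ m) s =
      -(1 / 12) * s ^ (m - 2) * (m ^ 2 - 1 + m * (6 * s ^ 2 / (2 * R + s ^ 2))) := by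
  have h2 : deriv (deriv fun t : ℝ => t ^ m) s = m * (m - 1) * s ^ (m - 2) := by
    rw [deriv_zpow', deriv_const_mul_field', deriv_zpow', sub_sub, mul_assoc]
    norm_num
  have hm1 : s ^ (m - 1) = s ^ (m - 2) * s := by
    rw [← zpow_add_one₀ hs]; ring_nf
  have hm : s ^ m = s ^ (m - 2) * s ^ 2 := by
    rw [← zpow_natCast, ← zpow_add₀ hs]; norm_num
  have hden : R * (1 + s ^ 2 / (2 * R)) = (2 * R + s ^ 2) / 2 := by
    field_simp
  unfold Lop
  beta_reduce
  rw [h2, deriv_zpow, hm1, hm, hden]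
  by_cases hden0 : 2 * R + s ^ 2 = 0
  · -- both drift coefficients are then junk divisions by zero, hence both vanish
    simp only [hden0, div_zero]
    field_simp
    ring
  · field_simp
    ring

theorem nine_div_two_le_six_mul_sq_div {R s : ℝ} (hR : 0 < R) (hs : 6 * R ≤ s ^ 2) :
    9 / 2 ≤ 6 * s ^ 2 / (2 * R + s ^ 2) := by
  rw [le_div_iff₀ (by positivity)]
  linarith

/-- the barrier q̂(s) = s⁻⁴ satisfies L[q̂](s) ≥ c/s⁶ for s large. -/
theorem barrier_positivity (R : ℝ) (hR : 0 < R) :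
    ∃ c > (0:ℝ), ∃ s₀ : ℝ, 1 ≤ s₀ ∧ ∀ s : ℝ, s₀ ≤ s →
      c / s ^ 6 ≤ Lop R (fun t => 1 / t ^ 4) s := by
  refine ⟨1 / 4, by norm_num, max 1 √(6 * R), le_max_left _ _, fun s hs => ?_⟩
  have hs_pos : 0 < s := one_pos.trans_le ((le_max_left _ _).trans hs)
  have hs_sq : 6 * R ≤ s ^ 2 :=
    (Real.sqrt_le_iff.mp ((le_max_right _ _).trans hs)).2
  have hpow : (fun t : ℝ => 1 / t ^ 4) = fun t => t ^ (-4 : ℤ) := by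
    funext t; simp [zpow_neg]
  rw [hpow, Lop_zpow hR.ne' _ hs_pos.ne', show (-4 : ℤ) - 2 = -6 by norm_num, zpow_neg,
    zpow_ofNat, mul_right_comm, ← div_eq_mul_inv]
  gcongr
  push_cast
  linarith [nine_div_two_le_six_mul_sq_div hR hs_sq]
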